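/- For every finite simple graph G without closed twins, the ID-number of G and the OD-number of its complement Ḡ differ by at most one, i.e., γ^OD(Ḡ) ≤ γ^ID(G) + 1 and γ^ID(G) ≤ γ^OD(Ḡ) + 1. -/
import Mathlib


open Finset

namespace SepDom

variable {V : Type*} [Fintype V] [DecidableEq V]

/-- The closed neighborhood `N[v]` of a vertex as a `Finset`. -/
def closedNbhd (G : SimpleGraph V) [DecidableRel G.Adj] (v : V) : Finset V :=
  insert v (G.neighborFinset v)

/-- `C` is a dominating set: `N[v] ∩ C ≠ ∅` for all `v`. -/
def IsDomSet (G : SimpleGraph V) [DecidableRel G.Adj] (C : Finset V) : Prop :=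
  ∀ v : V, (closedNbhd G v ∩ C).Nonempty

/-- `C` is a total-dominating set: `N(v) ∩ C ≠ ∅` for all `v`. -/
def IsTotalDomSet (G : SimpleGraph V) [DecidableRel G.Adj] (C : Finset V) : Prop :=
  ∀ v : V, (G.neighborFinset v ∩ C).Nonempty

/-- `C` is a locating set (L-set): the sets `N(v) ∩ C`, `v ∉ C`, are pairwise distinct. -/
def IsLSet (G : SimpleGraph V) [DecidableRel G.Adj] (C : Finset V) : Prop :=
  ∀ u ∉ C, ∀ v ∉ C, G.neighborFinset u ∩ C = G.neighborFinset v ∩ C → u = v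

/-- `C` is an open-separating set (O-set): the sets `N(v) ∩ C` are pairwise distinct. -/
def IsOSet (G : SimpleGraph V) [DecidableRel G.Adj] (C : Finset V) : Prop :=
  ∀ u v : V, G.neighborFinset u ∩ C = G.neighborFinset v ∩ C → u = v

/-- `C` is a closed-separating set (I-set): the sets `N[v] ∩ C` are pairwise distinct. -/
def IsISet (G : SimpleGraph V) [DecidableRel G.Adj] (C : Finset V) : Prop :=
  ∀ u v : V, closedNbhd G u ∩ C = closedNbhd G v ∩ C → u = v

/-- `C` is a full-separating set (F-set): both open- and closed-separating. -/
def IsFSet (G : SimpleGraph V) [DecidableRel G.Adj] (C : Finset V) : Prop :=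
  IsOSet G C ∧ IsISet G C

/-- `G` has open twins: distinct non-adjacent vertices with equal open neighborhoods. -/
def HasOpenTwins (G : SimpleGraph V) [DecidableRel G.Adj] : Prop :=
  ∃ u v : V, u ≠ v ∧ ¬ G.Adj u v ∧ G.neighborFinset u = G.neighborFinset v

/-- `G` has closed twins: distinct adjacent vertices with equal closed neighborhoods. -/
def HasClosedTwins (G : SimpleGraph V) [DecidableRel G.Adj] : Prop :=
  ∃ u v : V, u ≠ v ∧ G.Adj u v ∧ closedNbhd G u = closedNbhd G v

/-- `G` has an isolated vertex: a vertex with empty open neighborhood. -/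
def HasIsolated (G : SimpleGraph V) [DecidableRel G.Adj] : Prop :=
  ∃ v : V, G.neighborFinset v = ∅

/-- The L-number: minimum cardinality of an L-set. -/
noncomputable def lNum (G : SimpleGraph V) [DecidableRel G.Adj] : ℕ :=
  sInf {n | ∃ C : Finset V, IsLSet G C ∧ C.card = n}

/-- The O-number: minimum cardinality of an O-set. -/
noncomputable def oNum (G : SimpleGraph V) [DecidableRel G.Adj] : ℕ :=
  sInf {n | ∃ C : Finset V, IsOSet G C ∧ C.card = n}

/-- The I-number: minimum cardinality of an I-set. -/
noncomputable def iNum (G : SimpleGraph V) [DecidableRel G.Adj] : ℕ :=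
  sInf {n | ∃ C : Finset V, IsISet G C ∧ C.card = n}

/-- The F-number: minimum cardinality of an F-set. -/
noncomputable def fNum (G : SimpleGraph V) [DecidableRel G.Adj] : ℕ :=
  sInf {n | ∃ C : Finset V, IsFSet G C ∧ C.card = n}

/-- The LD-number: minimum cardinality of an LD-code. -/
noncomputable def ldNum (G : SimpleGraph V) [DecidableRel G.Adj] : ℕ :=
  sInf {n | ∃ C : Finset V, IsDomSet G C ∧ IsLSet G C ∧ C.card = n}

/-- The OD-number: minimum cardinality of an OD-code. -/
noncomputable def odNum (G : SimpleGraph V) [DecidableRel G.Adj] : ℕ :=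
  sInf {n | ∃ C : Finset V, IsDomSet G C ∧ IsOSet G C ∧ C.card = n}

/-- The ID-number: minimum cardinality of an ID-code. -/
noncomputable def idNum (G : SimpleGraph V) [DecidableRel G.Adj] : ℕ :=
  sInf {n | ∃ C : Finset V, IsDomSet G C ∧ IsISet G C ∧ C.card = n}

/-- The FD-number: minimum cardinality of an FD-code. -/
noncomputable def fdNum (G : SimpleGraph V) [DecidableRel G.Adj] : ℕ :=
  sInf {n | ∃ C : Finset V, IsDomSet G C ∧ IsFSet G C ∧ C.card = n}

/-- The LTD-number: minimum cardinality of an LTD-code. -/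
noncomputable def ltdNum (G : SimpleGraph V) [DecidableRel G.Adj] : ℕ :=
  sInf {n | ∃ C : Finset V, IsTotalDomSet G C ∧ IsLSet G C ∧ C.card = n}

/-- The OTD-number: minimum cardinality of an OTD-code. -/
noncomputable def otdNum (G : SimpleGraph V) [DecidableRel G.Adj] : ℕ :=
  sInf {n | ∃ C : Finset V, IsTotalDomSet G C ∧ IsOSet G C ∧ C.card = n}

/-- The ITD-number: minimum cardinality of an ITD-code. -/
noncomputable def itdNum (G : SimpleGraph V) [DecidableRel G.Adj] : ℕ :=
  sInf {n | ∃ C : Finset V, IsTotalDomSet G C ∧ IsISet G C ∧ C.card = n}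

/-- The FTD-number: minimum cardinality of an FTD-code. -/
noncomputable def ftdNum (G : SimpleGraph V) [DecidableRel G.Adj] : ℕ :=
  sInf {n | ∃ C : Finset V, IsTotalDomSet G C ∧ IsFSet G C ∧ C.card = n}

end SepDom

open SepDom

section Aux

variable {V : Type*} [Fintype V] [DecidableEq V]

lemma compl_nbhd (G : SimpleGraph V) [DecidableRel G.Adj] (v : V) :
    Gᶜ.neighborFinset v = (closedNbhd G v)ᶜ := by
  ext u
  simp only [SimpleGraph.mem_neighborFinset, SimpleGraph.compl_adj, closedNbhd,
    Finset.mem_compl, Finset.mem_insert, not_or]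
  constructor
  · rintro ⟨hne, hna⟩; exact ⟨fun h => hne h.symm, by simpa using hna⟩
  · rintro ⟨hne, hna⟩; exact ⟨fun h => hne h.symm, by simpa using hna⟩

lemma compl_nbhd_inter (G : SimpleGraph V) [DecidableRel G.Adj] (v : V) (C : Finset V) :
    Gᶜ.neighborFinset v ∩ C = C \ (closedNbhd G v ∩ C) := by
  rw [compl_nbhd]
  ext u
  simp only [Finset.mem_inter, Finset.mem_compl, Finset.mem_sdiff, Finset.mem_inter]
  tauto

lemma iset_iff_oset_compl (G : SimpleGraph V) [DecidableRel G.Adj] (C : Finset V) :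
    IsISet G C ↔ IsOSet Gᶜ C := by
  constructor
  · intro h u v hEq
    apply h u v
    rw [compl_nbhd_inter, compl_nbhd_inter] at hEq
    have hu : closedNbhd G u ∩ C ⊆ C := Finset.inter_subset_right
    have hv : closedNbhd G v ∩ C ⊆ C := Finset.inter_subset_right
    calc closedNbhd G u ∩ C = C \ (C \ (closedNbhd G u ∩ C)) :=
          (Finset.sdiff_sdiff_eq_self hu).symm
      _ = C \ (C \ (closedNbhd G v ∩ C)) := by rw [hEq]
      _ = closedNbhd G v ∩ C := Finset.sdiff_sdiff_eq_self hv
  · intro h u v hEq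
    apply h u v
    rw [compl_nbhd_inter, compl_nbhd_inter, hEq]

lemma oset_mono (G : SimpleGraph V) [DecidableRel G.Adj] {C D : Finset V}
    (hCD : C ⊆ D) (h : IsOSet G C) : IsOSet G D := by
  intro u v hEq
  apply h u v
  have : G.neighborFinset u ∩ D ∩ C = G.neighborFinset v ∩ D ∩ C := by rw [hEq]
  rwa [Finset.inter_assoc, Finset.inter_assoc,
    Finset.inter_eq_right.mpr hCD] at this

lemma iset_mono (G : SimpleGraph V) [DecidableRel G.Adj] {C D : Finset V}
    (hCD : C ⊆ D) (h : IsISet G C) : IsISet G D := by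
  intro u v hEq
  apply h u v
  have : closedNbhd G u ∩ D ∩ C = closedNbhd G v ∩ D ∩ C := by rw [hEq]
  rwa [Finset.inter_assoc, Finset.inter_assoc,
    Finset.inter_eq_right.mpr hCD] at this

lemma mem_closedNbhd_self (G : SimpleGraph V) [DecidableRel G.Adj] (v : V) :
    v ∈ closedNbhd G v := Finset.mem_insert_self _ _

end Aux

theorem id_od_compl_diff_le_one {V : Type*} [Fintype V] [DecidableEq V]
    (G : SimpleGraph V) [DecidableRel G.Adj] (hCT : ¬ HasClosedTwins G) :
    odNum Gᶜ ≤ idNum G + 1 ∧ idNum G ≤ odNum Gᶜ + 1 := by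
  classical
  -- univ is an I-set of G
  have hUnivI : IsISet G (Finset.univ : Finset V) := by
    intro u v h
    simp only [Finset.inter_univ] at h
    by_contra hne
    have hu : u ∈ closedNbhd G v := h ▸ mem_closedNbhd_self G u
    have : u = v ∨ G.Adj v u := by
      simpa [closedNbhd, SimpleGraph.mem_neighborFinset] using hu
    rcases this with h' | hadj
    · exact hne h'
    · exact hCT ⟨u, v, hne, hadj.symm, h⟩
  have hUnivDomG : IsDomSet G (Finset.univ : Finset V) := fun v =>
    ⟨v, by simp [mem_closedNbhd_self]⟩
  have hUnivDomGc : IsDomSet Gᶜ (Finset.univ : Finset V) := fun v =>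
    ⟨v, by simp [mem_closedNbhd_self]⟩
  have hSI : {n | ∃ C : Finset V, IsDomSet G C ∧ IsISet G C ∧ C.card = n}.Nonempty :=
    ⟨_, Finset.univ, hUnivDomG, hUnivI, rfl⟩
  have hSO : {n | ∃ C : Finset V, IsDomSet Gᶜ C ∧ IsOSet Gᶜ C ∧ C.card = n}.Nonempty :=
    ⟨_, Finset.univ, hUnivDomGc, (iset_iff_oset_compl G _).1 hUnivI, rfl⟩
  constructor
  · -- odNum Gᶜ ≤ idNum G + 1
    unfold odNum idNum
    obtain ⟨C, hdom, hI, hcard⟩ := Nat.sInf_mem hSI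
    have hO : IsOSet Gᶜ C := (iset_iff_oset_compl G C).1 hI
    have key : ∀ w : V, closedNbhd Gᶜ w ∩ C = ∅ → closedNbhd G w ∩ C = C := by
      intro w hw
      have h1 : Gᶜ.neighborFinset w ∩ C = ∅ := by
        apply Finset.eq_empty_of_forall_notMem
        intro x hx
        have : x ∈ closedNbhd Gᶜ w ∩ C := by
          rcases Finset.mem_inter.1 hx with ⟨hx1, hx2⟩
          exact Finset.mem_inter.2 ⟨Finset.mem_insert_of_mem hx1, hx2⟩
        simp [hw] at this
      rw [compl_nbhd_inter] at h1
      exact le_antisymm Finset.inter_subset_right (Finset.sdiff_eq_empty_iff_subset.1 h1)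
    by_cases hd : IsDomSet Gᶜ C
    · have := Nat.sInf_le (show C.card ∈ {n | ∃ C : Finset V, IsDomSet Gᶜ C ∧ IsOSet Gᶜ C ∧ C.card = n} from ⟨_, ‹_›, ‹_›, rfl⟩)
      omega
    · simp only [IsDomSet, not_forall] at hd
      obtain ⟨v0, hv0⟩ := hd
      have hv0e : closedNbhd Gᶜ v0 ∩ C = ∅ := Finset.not_nonempty_iff_eq_empty.1 hv0
      have hdom' : IsDomSet Gᶜ (insert v0 C) := by
        intro v
        by_cases hv : (closedNbhd Gᶜ v ∩ C).Nonempty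
        · exact hv.mono (Finset.inter_subset_inter subset_rfl (Finset.subset_insert _ _))
        · have hve : closedNbhd Gᶜ v ∩ C = ∅ := Finset.not_nonempty_iff_eq_empty.1 hv
          have : v = v0 := hI v v0 (by rw [key v hve, key v0 hv0e])
          subst this
          exact ⟨v, Finset.mem_inter.2 ⟨mem_closedNbhd_self _ _, Finset.mem_insert_self _ _⟩⟩
      have hO' : IsOSet Gᶜ (insert v0 C) := oset_mono Gᶜ (Finset.subset_insert _ _) hO
      have h1 := Nat.sInf_le (show (insert v0 C).card ∈ {n | ∃ C : Finset V, IsDomSet Gᶜ C ∧ IsOSet Gᶜ C ∧ C.card = n} from ⟨_, ‹_›, ‹_›, rfl⟩)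
      have h2 := Finset.card_insert_le v0 C
      omega
  · -- idNum G ≤ odNum Gᶜ + 1
    unfold odNum idNum
    obtain ⟨C, hdom, hO, hcard⟩ := Nat.sInf_mem hSO
    have hI : IsISet G C := (iset_iff_oset_compl G C).2 hO
    have key : ∀ w : V, closedNbhd G w ∩ C = ∅ → Gᶜ.neighborFinset w ∩ C = C := by
      intro w hw
      rw [compl_nbhd_inter, hw, Finset.sdiff_empty]
    by_cases hd : IsDomSet G C
    · have := Nat.sInf_le (show C.card ∈ {n | ∃ C : Finset V, IsDomSet G C ∧ IsISet G C ∧ C.card = n} from ⟨_, ‹_›, ‹_›, rfl⟩)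
      omega
    · simp only [IsDomSet, not_forall] at hd
      obtain ⟨v0, hv0⟩ := hd
      have hv0e : closedNbhd G v0 ∩ C = ∅ := Finset.not_nonempty_iff_eq_empty.1 hv0
      have hdom' : IsDomSet G (insert v0 C) := by
        intro v
        by_cases hv : (closedNbhd G v ∩ C).Nonempty
        · exact hv.mono (Finset.inter_subset_inter subset_rfl (Finset.subset_insert _ _))
        · have hve : closedNbhd G v ∩ C = ∅ := Finset.not_nonempty_iff_eq_empty.1 hv
          have : v = v0 := hO v v0 (by rw [key v hve, key v0 hv0e])
          subst this
          exact ⟨v, Finset.mem_inter.2 ⟨mem_closedNbhd_self _ _, Finset.mem_insert_self _ _⟩⟩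
      have hI' : IsISet G (insert v0 C) := iset_mono G (Finset.subset_insert _ _) hI
      have h1 := Nat.sInf_le (show (insert v0 C).card ∈ {n | ∃ C : Finset V, IsDomSet G C ∧ IsISet G C ∧ C.card = n} from ⟨_, ‹_›, ‹_›, rfl⟩)
      have h2 := Finset.card_insert_le v0 C
      omega
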